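/- Let A ∈ ℝ^{m×n} with m ≥ n have singular value decomposition A = U Σ Vᵀ with U, V orthogonal and Σ diagonal with diagonal entries σ₁ ≥ ⋯ ≥ σ_n ≥ 0, and let k < rank(A). Define A_k = U Σ_k Vᵀ, where Σ_k is obtained from Σ by replacing σ_{k+1}, …, σ_n with zeros. Then rank(A_k) = k and ‖A − A_k‖₂ = σ_{k+1}. -/

import Mathlib

open Matrix

/-- The Euclidean (2-)norm on `ℝ^m`. -/
noncomputable def eucNorm {m : ℕ} (v : Fin m → ℝ) : ℝ := Real.sqrt (∑ i, (v i) ^ 2)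

/-- The spectral norm `‖A‖₂ = max_{‖x‖₂ = 1} ‖Ax‖₂` of a real matrix. -/
noncomputable def matSpectralNorm {m n : ℕ} (A : Matrix (Fin m) (Fin n) ℝ) : ℝ :=
  sSup {r : ℝ | ∃ x : Fin n → ℝ, eucNorm x = 1 ∧ r = eucNorm (A.mulVec x)}

/-- `IsRSVD A U S V` says that `A = U Σ Vᵀ` is a singular value decomposition of the real
matrix `A`: `U`, `V` are orthogonal and `S` is diagonal with nonincreasing nonnegative
diagonal entries. -/
def IsRSVD {m n : ℕ} (A : Matrix (Fin m) (Fin n) ℝ) (U : Matrix (Fin m) (Fin m) ℝ)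
    (S : Matrix (Fin m) (Fin n) ℝ) (V : Matrix (Fin n) (Fin n) ℝ) : Prop :=
  Uᵀ * U = 1 ∧ Vᵀ * V = 1 ∧
  (∀ (i : Fin m) (j : Fin n), (i : ℕ) ≠ (j : ℕ) → S i j = 0) ∧
  (∀ (i : Fin m) (j : Fin n), 0 ≤ S i j) ∧
  (∀ (i i' : Fin m) (j j' : Fin n), (i : ℕ) = (j : ℕ) → (i' : ℕ) = (j' : ℕ) →
    (i : ℕ) ≤ (i' : ℕ) → S i' j' ≤ S i j) ∧
  A = U * S * Vᵀ

/-!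
Orthogonal factors change neither the rank nor the spectral norm, so everything reduces to the
rectangular diagonal matrices `Σ_k` and `Σ - Σ_k`. Since `rank A = rank Σ` is the number of
nonzero `σ_j` and these are nonincreasing, `k < rank A` forces `σ_{k+1} > 0`; hence `Σ_k` has
exactly `k` nonzero diagonal entries. The spectral norm of a diagonal matrix is its largest
absolute diagonal entry, which for `Σ - Σ_k = diag(0, …, 0, σ_{k+1}, …, σ_n)` is `σ_{k+1}`.
-/

lemma eucNorm_mulVec_of_transpose_mul_self_eq_one {p q : ℕ} {W : Matrix (Fin p) (Fin q) ℝ}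
    (hW : Wᵀ * W = 1) (x : Fin q → ℝ) : eucNorm (W *ᵥ x) = eucNorm x := by
  have hdot : (W *ᵥ x) ⬝ᵥ (W *ᵥ x) = x ⬝ᵥ x := by
    rw [dotProduct_mulVec, vecMul_mulVec, ← mulVec_transpose, hW, transpose_one, one_mulVec]
  simpa only [eucNorm, dotProduct, sq] using congrArg Real.sqrt hdot

lemma eucNorm_single {n : ℕ} (j : Fin n) (c : ℝ) : eucNorm (Pi.single j c) = |c| := by
  rw [eucNorm, Finset.sum_eq_single j (fun i _ hij => by simp [hij]) (by simp),
    Pi.single_eq_same, Real.sqrt_sq_eq_abs]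

lemma eucNorm_diagonal_mulVec_le {n : ℕ} {e : Fin n → ℝ} {c : ℝ} (hc : 0 ≤ c)
    (he : ∀ j, |e j| ≤ c) (x : Fin n → ℝ) : eucNorm (diagonal e *ᵥ x) ≤ c * eucNorm x := by
  have hsum : ∑ j, (diagonal e *ᵥ x) j ^ 2 ≤ c ^ 2 * ∑ j, x j ^ 2 := by
    rw [Finset.mul_sum]
    refine Finset.sum_le_sum fun j _ => ?_
    rw [mulVec_diagonal, mul_pow, ← sq_abs (e j)]
    gcongr
    exact he j
  calc eucNorm (diagonal e *ᵥ x) ≤ Real.sqrt (c ^ 2 * ∑ j, x j ^ 2) := Real.sqrt_le_sqrt hsum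
    _ = c * eucNorm x := by rw [Real.sqrt_mul (sq_nonneg c), Real.sqrt_sq hc, eucNorm]

lemma matSpectralNorm_diagonal {n : ℕ} {e : Fin n → ℝ} {j₀ : Fin n}
    (he : ∀ j, |e j| ≤ |e j₀|) : matSpectralNorm (diagonal e) = |e j₀| := by
  refine IsGreatest.csSup_eq ⟨⟨Pi.single j₀ 1, by simp [eucNorm_single], ?_⟩, ?_⟩
  · have hcol : diagonal e *ᵥ Pi.single j₀ 1 = Pi.single j₀ (e j₀) := by
      ext i
      rw [mulVec_diagonal]
      by_cases hi : i = j₀ <;> simp [hi]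
    rw [hcol, eucNorm_single]
  · rintro r ⟨x, hx, rfl⟩
    simpa [hx] using eucNorm_diagonal_mulVec_le (abs_nonneg _) he x

lemma matSpectralNorm_mul_left {p q r : ℕ} {W : Matrix (Fin p) (Fin q) ℝ} (hW : Wᵀ * W = 1)
    (M : Matrix (Fin q) (Fin r) ℝ) : matSpectralNorm (W * M) = matSpectralNorm M := by
  simp only [matSpectralNorm, ← mulVec_mulVec, eucNorm_mulVec_of_transpose_mul_self_eq_one hW]

lemma matSpectralNorm_mul_transpose_right {p q : ℕ} {V : Matrix (Fin q) (Fin q) ℝ}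
    (hV : Vᵀ * V = 1) (M : Matrix (Fin p) (Fin q) ℝ) :
    matSpectralNorm (M * Vᵀ) = matSpectralNorm M := by
  have hVt : Vᵀᵀ * Vᵀ = 1 := by rw [transpose_transpose, mul_eq_one_comm.mp hV]
  unfold matSpectralNorm
  congr 1
  ext r
  constructor
  · rintro ⟨x, hx, rfl⟩
    exact ⟨Vᵀ *ᵥ x, by rwa [eucNorm_mulVec_of_transpose_mul_self_eq_one hVt], by
      rw [mulVec_mulVec]⟩
  · rintro ⟨x, hx, rfl⟩
    exact ⟨V *ᵥ x, by rwa [eucNorm_mulVec_of_transpose_mul_self_eq_one hV], by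
      rw [← mulVec_mulVec, mulVec_mulVec x, hV, one_mulVec]⟩

lemma rank_mul_of_transpose_mul_self_eq_one {ι κ μ : Type*} [Fintype ι] [Fintype κ]
    [Fintype μ] [DecidableEq κ] {W : Matrix ι κ ℝ} (hW : Wᵀ * W = 1) (M : Matrix κ μ ℝ) :
    (W * M).rank = M.rank := by
  rw [← rank_transpose_mul_self, transpose_mul, Matrix.mul_assoc, ← Matrix.mul_assoc Wᵀ, hW,
    Matrix.one_mul, rank_transpose_mul_self]

lemma rank_mul_mul_transpose {ι κ μ : Type*} [Fintype ι] [Fintype κ] [Fintype μ]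
    [DecidableEq κ] [DecidableEq μ] {U : Matrix ι κ ℝ} {V : Matrix μ μ ℝ} (hU : Uᵀ * U = 1)
    (hV : Vᵀ * V = 1) (M : Matrix κ μ ℝ) : (U * M * Vᵀ).rank = M.rank := by
  rw [rank_mul_eq_left_of_isUnit_det _ _ (isUnit_det_of_left_inverse (mul_eq_one_comm.mp hV)),
    rank_mul_of_transpose_mul_self_eq_one hU]

def rectDiagonal {m n : ℕ} (d : Fin n → ℝ) : Matrix (Fin m) (Fin n) ℝ :=
  of fun i j => if (i : ℕ) = j then d j else 0

section rectDiagonal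

variable {m n : ℕ}

lemma rectDiagonal_eq_mul_diagonal (d : Fin n → ℝ) :
    (rectDiagonal d : Matrix (Fin m) (Fin n) ℝ) =
      (rectDiagonal 1 : Matrix (Fin m) (Fin n) ℝ) * diagonal d := by
  ext i j
  rw [mul_diagonal]
  by_cases hij : (i : ℕ) = j <;> simp [rectDiagonal, hij]

lemma transpose_rectDiagonal_one_mul_self (h : n ≤ m) :
    (rectDiagonal 1 : Matrix (Fin m) (Fin n) ℝ)ᵀ * (rectDiagonal 1 : Matrix (Fin m) (Fin n) ℝ) =
      1 := by
  ext j j'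
  rw [mul_apply, Finset.sum_eq_single (Fin.castLE h j)]
  · by_cases hjj : j = j' <;> simp [rectDiagonal, one_apply, hjj, Fin.val_eq_val]
  · intro i _ hi
    have : (i : ℕ) ≠ j := fun hij => hi (Fin.ext hij)
    simp [rectDiagonal, this]
  · simp

lemma rank_rectDiagonal (h : n ≤ m) (d : Fin n → ℝ) :
    (rectDiagonal d : Matrix (Fin m) (Fin n) ℝ).rank = Fintype.card {j // d j ≠ 0} := by
  rw [rectDiagonal_eq_mul_diagonal, rank_mul_of_transpose_mul_self_eq_one
    (transpose_rectDiagonal_one_mul_self h), rank_diagonal]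

lemma matSpectralNorm_rectDiagonal (h : n ≤ m) (d : Fin n → ℝ) :
    matSpectralNorm (rectDiagonal d : Matrix (Fin m) (Fin n) ℝ) =
      matSpectralNorm (diagonal d) := by
  rw [rectDiagonal_eq_mul_diagonal, matSpectralNorm_mul_left
    (transpose_rectDiagonal_one_mul_self h)]

lemma eq_rectDiagonal (h : n ≤ m) {S : Matrix (Fin m) (Fin n) ℝ}
    (hS : ∀ (i : Fin m) (j : Fin n), (i : ℕ) ≠ j → S i j = 0) :
    S = rectDiagonal fun j => S (Fin.castLE h j) j := by
  ext i j
  by_cases hij : (i : ℕ) = j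
  · simp [rectDiagonal, show i = Fin.castLE h j from Fin.ext hij]
  · simp [rectDiagonal, hij, hS i j hij]

end rectDiagonal

lemma card_ne_zero_le_of_antitone {α : Type*} [PartialOrder α] [Zero α] [DecidableEq α]
    {n : ℕ} {d : Fin n → α} (hd : Antitone d) (hnn : ∀ j, 0 ≤ d j) {j₀ : Fin n}
    (h0 : d j₀ = 0) : Fintype.card {j // d j ≠ 0} ≤ j₀ := by
  rw [Fintype.card_subtype, ← Fin.card_Iio j₀]
  refine Finset.card_le_card fun j hj => Finset.mem_Iio.mpr (lt_of_not_ge fun hle => ?_)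
  exact (Finset.mem_filter.mp hj).2 (le_antisymm (h0 ▸ hd hle) (hnn j))

lemma card_ne_zero_truncate {α : Type*} [Zero α] [DecidableEq α] {n k : ℕ} (hk : k ≤ n)
    {d : Fin n → α} (hd : ∀ j : Fin n, (j : ℕ) < k → d j ≠ 0) :
    Fintype.card {j : Fin n // (if (j : ℕ) < k then d j else 0) ≠ 0} = k := by
  have hiff : ∀ j : Fin n, (if (j : ℕ) < k then d j else 0) ≠ 0 ↔ (j : ℕ) < k := fun j => by
    by_cases hj : (j : ℕ) < k <;> simp [hj, hd]
  rw [Fintype.card_subtype, Finset.filter_congr fun j _ => hiff j, Fin.card_filter_val_lt,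
    min_eq_right hk]

lemma matSpectralNorm_diagonal_tail {n k : ℕ} {d : Fin n → ℝ} (hd : Antitone d)
    (hnn : ∀ j, 0 ≤ d j) (hkn : k < n) :
    matSpectralNorm (diagonal fun j => if (j : ℕ) < k then 0 else d j) = d ⟨k, hkn⟩ := by
  rw [matSpectralNorm_diagonal (j₀ := ⟨k, hkn⟩)]
  · simp [hnn]
  · intro j
    by_cases hj : (j : ℕ) < k
    · simp [hj]
    · simp only [hj, if_false, lt_irrefl]
      rw [abs_of_nonneg (hnn _), abs_of_nonneg (hnn _)]
      exact hd (Fin.le_def.mpr (not_lt.mp hj))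

/-- For `A ∈ ℝ^{m×n}` (`m ≥ n`) with SVD `A = U Σ Vᵀ` and `k < rank(A)`, the truncated
matrix `A_k = U Σ_k Vᵀ` (where the singular values `σ_{k+1}, …, σ_n` are replaced by
zeros) has rank `k` and satisfies `‖A − A_k‖₂ = σ_{k+1}`. -/
theorem truncated_svd_rank_and_error {m n k : ℕ} (hnm : n ≤ m)
    (A : Matrix (Fin m) (Fin n) ℝ) (U : Matrix (Fin m) (Fin m) ℝ)
    (S : Matrix (Fin m) (Fin n) ℝ) (V : Matrix (Fin n) (Fin n) ℝ)
    (hsvd : IsRSVD A U S V) (hk : k < A.rank) (hkn : k < n)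
    (Sk : Matrix (Fin m) (Fin n) ℝ)
    (hSk : Sk = Matrix.of fun (i : Fin m) (j : Fin n) =>
      if (i : ℕ) < k ∧ (j : ℕ) < k then S i j else 0) :
    (U * Sk * Vᵀ).rank = k ∧
    matSpectralNorm (A - U * Sk * Vᵀ) = S (Fin.castLE hnm ⟨k, hkn⟩) ⟨k, hkn⟩ := by
  obtain ⟨hU, hV, hdiag, hnn, hmono, hA⟩ := hsvd
  set σ : Fin n → ℝ := fun j => S (Fin.castLE hnm j) j
  have hσ_anti : Antitone σ := fun j j' hjj' => hmono _ _ _ _ rfl rfl hjj'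
  have hσ_nonneg : ∀ j, 0 ≤ σ j := fun j => hnn _ _
  have hS : S = rectDiagonal σ := eq_rectDiagonal hnm hdiag
  have hSk' : Sk = rectDiagonal fun j => if (j : ℕ) < k then σ j else 0 := by
    rw [hSk, hS]
    ext i j
    by_cases hij : (i : ℕ) = j <;> simp [rectDiagonal, hij]
  have hres : S - Sk = rectDiagonal fun j => if (j : ℕ) < k then 0 else σ j := by
    rw [hSk', hS]
    ext i j
    by_cases hij : (i : ℕ) = j <;> by_cases hj : (j : ℕ) < k <;> simp [rectDiagonal, hij, hj]
  have hσk_pos : 0 < σ ⟨k, hkn⟩ := by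
    refine (hσ_nonneg _).lt_of_ne' fun h0 => ?_
    rw [hA, rank_mul_mul_transpose hU hV, hS, rank_rectDiagonal hnm] at hk
    exact absurd hk (not_lt.mpr (card_ne_zero_le_of_antitone hσ_anti hσ_nonneg h0))
  refine ⟨?_, ?_⟩
  · rw [rank_mul_mul_transpose hU hV, hSk', rank_rectDiagonal hnm]
    exact card_ne_zero_truncate hkn.le fun j hj =>
      (hσk_pos.trans_le (hσ_anti (Fin.le_def.mpr hj.le))).ne'
  · rw [hA, ← Matrix.sub_mul, ← Matrix.mul_sub, matSpectralNorm_mul_transpose_right hV,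
      matSpectralNorm_mul_left hU, hres, matSpectralNorm_rectDiagonal hnm]
    exact matSpectralNorm_diagonal_tail hσ_anti hσ_nonneg hkn
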